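/- Let G be a finite simple graph on a vertex set V. If an amplitude function ψ : (V → Bool) → ℂ satisfies K_a ψ = ψ for every vertex a ∈ V, where K_a := σ_x^{(a)} ∘ ∏_{b ∈ N(a)} σ_z^{(b)}, then ψ is a scalar multiple of the graph state |G⟩. That is, the joint +1 eigenspace of the correlation operators {K_a : a ∈ V} is one-dimensional, spanned by |G⟩: the graph state is THE joint eigenstate of its commuting correlation operators. -/

import Mathlib

open scoped BigOperators Classical

noncomputable section

/-- The number `q_G(x)` of edges `{a,b}` of `G` with `x a = x b = true`. -/
def qCount {V : Type} [Fintype V] [DecidableEq V] (G : SimpleGraph V)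
    (x : V → Bool) : ℕ :=
  (Finset.univ.filter fun e : Sym2 V => e ∈ G.edgeSet ∧ ∀ v ∈ e, x v = true).card

/-- The graph state of a finite simple graph `G` on the vertex set `V`:
`|G⟩(x) = 2^{−n/2} · (−1)^{q_G(x)}` where `n = |V|`. -/
def graphState {V : Type} [Fintype V] [DecidableEq V] (G : SimpleGraph V) :
    (V → Bool) → ℂ :=
  fun x => (1 / (Real.sqrt (2 ^ Fintype.card V) : ℂ)) * (-1) ^ qCount G x

/-- The Pauli operator `σ_z` at qubit `a`: `(σ_z^{(a)} ψ)(x) = (−1)^{x a} ψ(x)`. -/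
def sigmaZ {V : Type} (a : V) (ψ : (V → Bool) → ℂ) : (V → Bool) → ℂ :=
  fun x => (if x a then (-1 : ℂ) else 1) * ψ x

/-- The Pauli operator `σ_x` at qubit `a`:
`(σ_x^{(a)} ψ)(x) = ψ(x with the coordinate at a flipped)`. -/
def sigmaX {V : Type} [DecidableEq V] (a : V) (ψ : (V → Bool) → ℂ) :
    (V → Bool) → ℂ :=
  fun x => ψ (Function.update x a (!x a))

/-- The product `∏_{b ∈ S} σ_z^{(b)}` of Pauli `σ_z` operators over a finite set
of qubits. -/
def sigmaZprod {V : Type} (S : Finset V) (ψ : (V → Bool) → ℂ) :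
    (V → Bool) → ℂ :=
  fun x => (∏ b ∈ S, if x b then (-1 : ℂ) else 1) * ψ x

/-- The correlation operator `K_a := σ_x^{(a)} ∘ ∏_{b ∈ N(a)} σ_z^{(b)}` of the
graph `G` at the vertex `a`, where `N(a)` is the neighborhood of `a` in `G`. -/
def corrOp {V : Type} [Fintype V] [DecidableEq V] (G : SimpleGraph V) (a : V)
    (ψ : (V → Bool) → ℂ) : (V → Bool) → ℂ :=
  sigmaX a (sigmaZprod (Finset.univ.filter fun b => G.Adj a b) ψ)

lemma pow_card_filter {α : Type*} [Fintype α] (p : α → Prop) [DecidablePred p] :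
    ((-1 : ℂ)) ^ (Finset.univ.filter p).card = ∏ e : α, if p e then (-1 : ℂ) else 1 := by
  rw [Finset.prod_ite, Finset.prod_const, Finset.prod_const_one, mul_one]

lemma filter_mem_eq_image {V : Type} [Fintype V] [DecidableEq V] (a : V) :
    (Finset.univ.filter fun e : Sym2 V => a ∈ e) = Finset.univ.image (fun b => s(a, b)) := by
  ext e
  simp only [Finset.mem_filter, Finset.mem_univ, true_and, Finset.mem_image]
  constructor
  · intro ha
    induction e with
    | _ u v =>
      rcases Sym2.mem_iff.mp ha with rfl | rfl
      · exact ⟨v, rfl⟩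
      · exact ⟨u, Sym2.eq_swap⟩
  · rintro ⟨b, rfl⟩
    exact Sym2.mem_mk_left a b

lemma sign_q_update {V : Type} [Fintype V] [DecidableEq V] (G : SimpleGraph V)
    (a : V) (x : V → Bool) :
    ((-1 : ℂ)) ^ qCount G (Function.update x a (!x a)) =
      (∏ b ∈ Finset.univ.filter fun b => G.Adj a b, if x b then (-1 : ℂ) else 1) *
        (-1) ^ qCount G x := by
  classical
  set y := Function.update x a (!x a) with hy
  have hyne : ∀ v, v ≠ a → y v = x v := fun v hv => Function.update_of_ne hv _ _
  have hprod : ∀ z : V → Bool, ((-1:ℂ)) ^ qCount G z =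
      ∏ e : Sym2 V, if e ∈ G.edgeSet ∧ ∀ v ∈ e, z v = true then (-1:ℂ) else 1 := by
    intro z; exact pow_card_filter _
  rw [hprod, hprod]
  -- rewrite the neighbor product as product over all b
  have hN : (∏ b ∈ Finset.univ.filter fun b => G.Adj a b, if x b then (-1 : ℂ) else 1)
      = ∏ b : V, if G.Adj a b then (if x b then (-1:ℂ) else 1) else 1 := by
    rw [Finset.prod_filter]
  rw [hN]
  -- split Sym2 products into edges containing a and not
  have split : ∀ z : V → Bool,
      (∏ e : Sym2 V, if e ∈ G.edgeSet ∧ ∀ v ∈ e, z v = true then (-1:ℂ) else 1)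
      = (∏ e ∈ Finset.univ.filter fun e : Sym2 V => a ∈ e,
            if e ∈ G.edgeSet ∧ ∀ v ∈ e, z v = true then (-1:ℂ) else 1) *
        (∏ e ∈ Finset.univ.filter fun e : Sym2 V => ¬ a ∈ e,
            if e ∈ G.edgeSet ∧ ∀ v ∈ e, z v = true then (-1:ℂ) else 1) := by
    intro z
    rw [Finset.prod_filter_mul_prod_filter_not]
  rw [split, split]
  -- the "not containing a" parts coincide
  have hnot : (∏ e ∈ Finset.univ.filter fun e : Sym2 V => ¬ a ∈ e,
            if e ∈ G.edgeSet ∧ ∀ v ∈ e, y v = true then (-1:ℂ) else 1)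
      = ∏ e ∈ Finset.univ.filter fun e : Sym2 V => ¬ a ∈ e,
            if e ∈ G.edgeSet ∧ ∀ v ∈ e, x v = true then (-1:ℂ) else 1 := by
    apply Finset.prod_congr rfl
    intro e he
    simp only [Finset.mem_filter, Finset.mem_univ, true_and] at he
    have : (∀ v ∈ e, y v = true) ↔ (∀ v ∈ e, x v = true) := by
      constructor <;> intro hall v hv <;>
        [rw [← hyne v (fun hva => he (hva ▸ hv))]; rw [hyne v (fun hva => he (hva ▸ hv))]] <;>
        exact hall v hv
    rw [if_congr (and_congr_right fun _ => this) rfl rfl]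
  rw [hnot]
  -- the "containing a" parts: reindex over neighbors
  have hinj : Set.InjOn (fun b => s(a, b)) (Finset.univ : Finset V) := by
    intro b _ c _ hbc
    simpa using (Sym2.eq_iff.mp hbc).elim (fun h => h.2) (fun h => h.2.trans h.1)
  have himg : ∀ z : V → Bool,
      (∏ e ∈ Finset.univ.filter fun e : Sym2 V => a ∈ e,
          if e ∈ G.edgeSet ∧ ∀ v ∈ e, z v = true then (-1:ℂ) else 1)
      = ∏ b : V, if G.Adj a b ∧ z a = true ∧ z b = true then (-1:ℂ) else 1 := by
    intro z
    rw [filter_mem_eq_image a, Finset.prod_image (fun b hb c hc => hinj hb hc)]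
    apply Finset.prod_congr rfl
    intro b _
    have hmem : (∀ v ∈ s(a, b), z v = true) ↔ (z a = true ∧ z b = true) := by
      constructor
      · intro hall; exact ⟨hall a (Sym2.mem_mk_left a b), hall b (Sym2.mem_mk_right a b)⟩
      · rintro ⟨h1, h2⟩ v hv
        rcases Sym2.mem_iff.mp hv with rfl | rfl <;> assumption
    rw [if_congr (and_congr (SimpleGraph.mem_edgeSet G) hmem) rfl rfl]
  rw [himg, himg]
  have key : (∏ b : V, if G.Adj a b ∧ y a = true ∧ y b = true then (-1:ℂ) else 1)
      = ∏ b : V, (if G.Adj a b then (if x b = true then (-1:ℂ) else 1) else 1) *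
          (if G.Adj a b ∧ x a = true ∧ x b = true then (-1:ℂ) else 1) := by
    apply Finset.prod_congr rfl
    intro b _
    by_cases hadj : G.Adj a b
    · have hba : b ≠ a := fun hba => G.irrefl (hba ▸ hadj)
      have hya : y a = !x a := Function.update_self a _ x
      have hyb : y b = x b := hyne b hba
      simp only [hadj, true_and, if_true, hya, hyb]
      cases hxa : x a <;> cases hxb : x b <;> norm_num
    · simp [hadj]
  rw [key, Finset.prod_mul_distrib, mul_assoc]

/-- If an amplitude function `ψ` satisfies `K_a ψ = ψ` for every vertex `a` of a
finite simple graph `G`, then `ψ` is a scalar multiple of the graph state `|G⟩`: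
the joint `+1` eigenspace of the commuting correlation operators is
one-dimensional, spanned by `|G⟩`. -/
theorem graphState_unique_joint_eigenstate {V : Type} [Fintype V] [DecidableEq V]
    (G : SimpleGraph V) (ψ : (V → Bool) → ℂ)
    (h : ∀ a : V, corrOp G a ψ = ψ) :
    ∃ c : ℂ, ψ = fun x => c * graphState G x := by
  classical
  set Φ : (V → Bool) → ℂ := fun x => ((-1 : ℂ)) ^ qCount G x * ψ x with hΦdef
  have hP2 : ∀ (a : V) (x : V → Bool),
      (∏ b ∈ Finset.univ.filter fun b => G.Adj a b, if x b then (-1 : ℂ) else 1) *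
      (∏ b ∈ Finset.univ.filter fun b => G.Adj a b, if x b then (-1 : ℂ) else 1) = 1 := by
    intro a x
    rw [← Finset.prod_mul_distrib]
    apply Finset.prod_eq_one
    intro b _
    cases x b <;> norm_num
  have hcorr : ∀ (a : V) (x : V → Bool),
      ψ x = (∏ b ∈ Finset.univ.filter fun b => G.Adj a b, if x b then (-1 : ℂ) else 1) *
        ψ (Function.update x a (!x a)) := by
    intro a x
    have := congrFun (h a) x
    simp only [corrOp, sigmaX, sigmaZprod] at this
    rw [← this]
    congr 1
    apply Finset.prod_congr rfl
    intro b hb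
    have hba : b ≠ a := by
      simp only [Finset.mem_filter] at hb
      exact fun hba => G.irrefl (hba ▸ hb.2)
    rw [Function.update_of_ne hba]
  have hflip : ∀ (a : V) (x : V → Bool), Φ (Function.update x a (!x a)) = Φ x := by
    intro a x
    simp only [hΦdef]
    rw [sign_q_update G a x]
    set P := (∏ b ∈ Finset.univ.filter fun b => G.Adj a b, if x b then (-1 : ℂ) else 1)
    have hψ : ψ (Function.update x a (!x a)) = P * ψ x := by
      have := hcorr a x
      calc ψ (Function.update x a (!x a))
          = (P * P) * ψ (Function.update x a (!x a)) := by rw [hP2 a x]; ring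
        _ = P * (P * ψ (Function.update x a (!x a))) := by ring
        _ = P * ψ x := by rw [← this]
    rw [hψ]
    have := hP2 a x
    calc P * (-1 : ℂ) ^ qCount G x * (P * ψ x)
        = (P * P) * ((-1 : ℂ) ^ qCount G x * ψ x) := by ring
      _ = (-1 : ℂ) ^ qCount G x * ψ x := by rw [hP2 a x]; ring
  -- Φ is constant
  have hconst : ∀ x : V → Bool, Φ x = Φ (fun _ => false) := by
    have key : ∀ n (x : V → Bool),
        (Finset.univ.filter fun v => x v = true).card = n → Φ x = Φ (fun _ => false) := by
      intro n
      induction n with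
      | zero =>
        intro x hx
        have hempty : (Finset.univ.filter fun v => x v = true) = ∅ :=
          Finset.card_eq_zero.mp hx
        have : x = fun _ => false := by
          funext v
          by_contra hv
          have : x v = true := by revert hv; cases x v <;> simp
          have : v ∈ (Finset.univ.filter fun v => x v = true) := by
            simp [this]
          rw [hempty] at this
          exact absurd this (Finset.notMem_empty v)
        rw [this]
      | succ n ih =>
        intro x hx
        have hne : (Finset.univ.filter fun v => x v = true).Nonempty := by
          rw [← Finset.card_pos, hx]; omega
        obtain ⟨a, ha⟩ := hne
        have hxa : x a = true := (Finset.mem_filter.mp ha).2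
        set x' := Function.update x a false with hx'
        have hx'a : x' a = false := Function.update_self a false x
        have hxx' : x = Function.update x' a (!x' a) := by
          funext v
          by_cases hv : v = a
          · subst hv
            rw [Function.update_self, hx'a, hxa]
            rfl
          · rw [Function.update_of_ne hv, hx', Function.update_of_ne hv]
        have hcard : (Finset.univ.filter fun v => x' v = true).card = n := by
          have hset : (Finset.univ.filter fun v => x' v = true)
              = (Finset.univ.filter fun v => x v = true).erase a := by
            ext v
            simp only [Finset.mem_filter, Finset.mem_univ, true_and, Finset.mem_erase]
            by_cases hv : v = a
            · subst hv
              simp [hx'a]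
            · rw [hx', Function.update_of_ne hv]
              simp [hv]
          rw [hset, Finset.card_erase_of_mem ha, hx]
          omega
        calc Φ x = Φ (Function.update x' a (!x' a)) := by rw [← hxx']
          _ = Φ x' := hflip a x'
          _ = Φ (fun _ => false) := ih x' hcard
    intro x
    exact key _ x rfl
  -- assemble
  set k := Φ (fun _ => false) with hk
  have hsqrt : ((Real.sqrt (2 ^ Fintype.card V) : ℝ) : ℂ) ≠ 0 := by
    have : (0 : ℝ) < Real.sqrt (2 ^ Fintype.card V) :=
      Real.sqrt_pos.mpr (by positivity)
    exact_mod_cast ne_of_gt this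
  refine ⟨k * ((Real.sqrt (2 ^ Fintype.card V) : ℝ) : ℂ), ?_⟩
  funext x
  have hΦx : Φ x = k := hconst x
  have hψx : ψ x = ((-1 : ℂ)) ^ qCount G x * k := by
    rw [← hΦx, hΦdef]
    have : ((-1 : ℂ)) ^ qCount G x * ((-1 : ℂ)) ^ qCount G x = 1 := by
      rw [← pow_add, ← two_mul, pow_mul]
      norm_num
    calc ψ x = (((-1 : ℂ)) ^ qCount G x * ((-1 : ℂ)) ^ qCount G x) * ψ x := by
          rw [this, one_mul]
      _ = (-1 : ℂ) ^ qCount G x * ((-1 : ℂ) ^ qCount G x * ψ x) := by ring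
  rw [hψx]
  simp only [graphState]
  field_simp
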